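/- arXiv:1509.05449 — 3 statements merged into one kernel-verified Lean document; each statement's English description precedes it below -/
import Mathlib

section
/- Let G be a distribution function with right endpoint G_* = sup{x : G(x) < 1}. There exist γ ∈ (0,1) and a sequence (v_n) of reals such that G(v_n)^n → γ if and only if G is regular, i.e. G(G_*−) = 1 and lim_{x→G_*−} (1 − G(x−))/(1 − G(x)) = 1. -/
open Filter Topology Classical

/-- A distribution function: nondecreasing, right-continuous, limits 0 and 1. -/
def IsDistFun (G : ℝ → ℝ) : Prop :=
  Monotone G ∧ (∀ x, ContinuousWithinAt G (Set.Ici x) x) ∧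
    Tendsto G atBot (𝓝 0) ∧ Tendsto G atTop (𝓝 1)

/-- The filter of approach to the right endpoint `G_* = sup {x : G x < 1}` from the left
(`atTop` if the endpoint is `+∞`). -/
noncomputable def endFilter (G : ℝ → ℝ) : Filter ℝ :=
  if BddAbove {x | G x < 1} then 𝓝[<] (sSup {x | G x < 1}) else atTop

/-- Regularity in the sense of O'Brien: `G(G_*−) = 1` and `(1−G(x−))/(1−G(x)) → 1`
as `x → G_*−`. -/
def RegularDF (G : ℝ → ℝ) : Prop :=
  Tendsto G (endFilter G) (𝓝 1) ∧
  Tendsto (fun x => (1 - Function.leftLim G x) / (1 - G x)) (endFilter G) (𝓝 1)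

/-- Strict tail-equivalence: same right endpoint and `(1−H(x))/(1−G(x)) → 1` at the endpoint. -/
def StrictTailEquiv (G H : ℝ → ℝ) : Prop :=
  (BddAbove {x | G x < 1} ↔ BddAbove {x | H x < 1}) ∧
  sSup {x | G x < 1} = sSup {x | H x < 1} ∧
  Tendsto (fun x => (1 - H x) / (1 - G x)) (endFilter G) (𝓝 1)


/-!
Write `wₙ = G (vₙ)`. Then `wₙ ^ n → γ ∈ (0,1)` amounts to `n (1 - wₙ) → -log γ`.

Given such a sequence, for `x` near the endpoint `1 - G x` falls between two consecutive terms
`1 - w_{N+1} ≤ 1 - G x < 1 - w_N`, and then so does `1 - G (x-)`, because `G (v_N) < G x` forces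
`v_N < x`. Consecutive terms have ratio tending to `1`, hence so does `(1 - G (x-)) / (1 - G x)`.

Conversely, if `G` is regular, the `(1 - 1/n)`-quantiles `vₙ` satisfy
`G (vₙ-) ≤ 1 - 1/n ≤ G (vₙ)`, and regularity squeezes `n (1 - G (vₙ))` to `1`, so that
`G (vₙ) ^ n → exp (-1)`.
-/

lemma tendsto_zero_of_tendsto_nat_mul {f : ℕ → ℝ} {L : ℝ}
    (h : Tendsto (fun n : ℕ => (n : ℝ) * f n) atTop (𝓝 L)) : Tendsto f atTop (𝓝 0) := by
  have := h.mul (tendsto_inv_atTop_nhds_zero_nat (𝕜 := ℝ))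
  rw [mul_zero] at this
  refine this.congr' ?_
  filter_upwards [eventually_ne_atTop 0] with n hn
  field_simp

/-- The squeeze `log w ≤ w - 1 ≤ w log w` turns `n log wₙ → log γ` into `n (wₙ - 1) → log γ`. -/
lemma tendsto_nat_mul_sub_one_of_tendsto_pow {w : ℕ → ℝ} {γ : ℝ} (hw : ∀ n, 0 ≤ w n)
    (hγ : 0 < γ) (h : Tendsto (fun n => w n ^ n) atTop (𝓝 γ)) :
    Tendsto (fun n : ℕ => (n : ℝ) * (w n - 1)) atTop (𝓝 (Real.log γ)) := by
  have hpos : ∀ᶠ n in atTop, 0 < w n := by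
    filter_upwards [h.eventually_const_lt hγ, eventually_ne_atTop 0] with n hn hn0
    refine (hw n).lt_of_ne fun h0 => ?_
    rw [← h0, zero_pow hn0] at hn
    exact hn.false
  have hlog : Tendsto (fun n : ℕ => (n : ℝ) * Real.log (w n)) atTop (𝓝 (Real.log γ)) :=
    ((Real.continuousAt_log hγ.ne').tendsto.comp h).congr fun n => by simp [Real.log_pow]
  have hw1 : Tendsto w atTop (𝓝 1) := by
    have := (Real.continuous_exp.tendsto 0).comp (tendsto_zero_of_tendsto_nat_mul hlog)
    rw [Real.exp_zero] at this
    refine this.congr' ?_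
    filter_upwards [hpos] with n hn using Real.exp_log hn
  have hupper : Tendsto (fun n : ℕ => w n * ((n : ℝ) * Real.log (w n))) atTop
      (𝓝 (Real.log γ)) := by
    simpa using hw1.mul hlog
  refine tendsto_of_tendsto_of_tendsto_of_le_of_le' hlog hupper ?_ ?_
  · filter_upwards [hpos] with n hn
    exact mul_le_mul_of_nonneg_left (Real.log_le_sub_one_of_pos hn) n.cast_nonneg
  · filter_upwards [hpos] with n hn
    have hw : w n - 1 ≤ w n * Real.log (w n) := by
      have := mul_le_mul_of_nonneg_left (Real.one_sub_inv_le_log_of_pos hn) hn.le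
      rwa [mul_sub, mul_one, mul_inv_cancel₀ hn.ne'] at this
    nlinarith [(n.cast_nonneg : (0 : ℝ) ≤ n)]

lemma tendsto_div_succ_of_tendsto_nat_mul {s : ℕ → ℝ} {τ : ℝ} (hτ : τ ≠ 0)
    (h : Tendsto (fun n : ℕ => (n : ℝ) * s n) atTop (𝓝 τ)) :
    Tendsto (fun n => s n / s (n + 1)) atTop (𝓝 1) := by
  have hsucc : Tendsto (fun n : ℕ => ((n : ℝ) + 1) * s (n + 1)) atTop (𝓝 τ) := by
    refine (h.comp (tendsto_add_atTop_nat 1)).congr fun n => ?_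
    simp
  have hfrac : Tendsto (fun n : ℕ => ((n : ℝ) + 1) / n) atTop (𝓝 1) := by
    simpa using (tendsto_natCast_div_add_atTop (1 : ℝ)).inv₀ one_ne_zero
  have := (h.div hsucc hτ).mul hfrac
  rw [div_self hτ, one_mul] at this
  refine this.congr' ?_
  filter_upwards [eventually_ne_atTop 0, hsucc.eventually_ne hτ] with n hn hs
  have hs' : s (n + 1) ≠ 0 := right_ne_zero_of_mul hs
  simp only [Pi.div_apply]
  field_simp

lemma exists_downcrossing_of_tendsto_zero {s : ℕ → ℝ} (hs : Tendsto s atTop (𝓝 0)) {c : ℝ}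
    (hc : 0 < c) {m : ℕ} (hm : c < s m) : ∃ N, m ≤ N ∧ c < s N ∧ s (N + 1) ≤ c := by
  by_contra! h
  have hall : ∀ N, m ≤ N → c < s N := fun N hN => Nat.le_induction hm h N hN
  obtain ⟨N, hsN, hmN⟩ := ((hs.eventually (gt_mem_nhds hc)).and (eventually_ge_atTop m)).exists
  exact (hall N hmN).not_gt hsN

lemma tendsto_div_of_forall_lt_imp_le {ι : Type*} {l : Filter ι} {s : ℕ → ℝ} {p q : ι → ℝ}
    (hs0 : Tendsto s atTop (𝓝 0)) (hs_pos : ∀ᶠ n in atTop, 0 < s n)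
    (hs : Tendsto (fun n => s n / s (n + 1)) atTop (𝓝 1))
    (hq0 : Tendsto q l (𝓝 0)) (hqp : ∀ᶠ x in l, 0 < q x ∧ q x ≤ p x)
    (hp : ∀ x n, q x < s n → p x ≤ s n) :
    Tendsto (fun x => p x / q x) l (𝓝 1) := by
  refine tendsto_order.2 ⟨fun a ha => ?_, fun b hb => ?_⟩
  · filter_upwards [hqp] with x hx
    exact ha.trans_le ((one_le_div hx.1).2 hx.2)
  · obtain ⟨m, hm⟩ := eventually_atTop.1 ((hs.eventually (gt_mem_nhds hb)).and hs_pos)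
    filter_upwards [hqp, hq0.eventually (gt_mem_nhds (hm m le_rfl).2)] with x hx hxm
    obtain ⟨N, hmN, hqN, hNq⟩ := exists_downcrossing_of_tendsto_zero hs0 hx.1 hxm
    calc p x / q x ≤ s N / s (N + 1) :=
          div_le_div₀ (hx.1.trans hqN).le (hp x N hqN) (hm (N + 1) (by omega)).2 hNq
      _ < b := (hm N hmN).1

lemma tendsto_nat_mul_of_le_one_div_le {a b : ℕ → ℝ}
    (hab : ∀ᶠ n in atTop, 0 < a n ∧ a n ≤ 1 / n ∧ 1 / n ≤ b n)
    (hba : Tendsto (fun n => b n / a n) atTop (𝓝 1)) :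
    Tendsto (fun n : ℕ => (n : ℝ) * a n) atTop (𝓝 1) := by
  have hinv : Tendsto (fun n => (b n / a n)⁻¹) atTop (𝓝 1) := by
    simpa using hba.inv₀ one_ne_zero
  refine tendsto_of_tendsto_of_tendsto_of_le_of_le' hinv tendsto_const_nhds ?_ ?_
  · filter_upwards [hab, eventually_gt_atTop 0] with n ⟨ha, _, hb⟩ hn
    have hn' : (0 : ℝ) < n := by exact_mod_cast hn
    have hnb : 1 ≤ n * b n := by rwa [div_le_iff₀' hn'] at hb
    rw [inv_div, div_le_iff₀ ((one_div_pos.2 hn').trans_le hb)]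
    nlinarith
  · filter_upwards [hab, eventually_gt_atTop 0] with n ⟨_, ha, _⟩ hn
    have hn' : (0 : ℝ) < n := by exact_mod_cast hn
    rwa [le_div_iff₀' hn'] at ha

lemma tendsto_endFilter_iff_leftLim {G : ℝ → ℝ} (hG : Monotone G)
    (hB : BddAbove {x | G x < 1}) :
    Tendsto G (endFilter G) (𝓝 1) ↔ Function.leftLim G (sSup {x | G x < 1}) = 1 := by
  rw [endFilter, if_pos hB]
  exact ⟨tendsto_nhds_unique (hG.tendsto_leftLim _),
    fun h => by simpa only [h] using hG.tendsto_leftLim (sSup {x | G x < 1})⟩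

namespace IsDistFun

variable {G : ℝ → ℝ}

lemma le_one (hG : IsDistFun G) (x : ℝ) : G x ≤ 1 := hG.1.ge_of_tendsto hG.2.2.2 x

lemma nonneg (hG : IsDistFun G) (x : ℝ) : 0 ≤ G x := hG.1.le_of_tendsto hG.2.2.1 x

lemma apply_sSup_eq_one (hG : IsDistFun G) (hB : BddAbove {x | G x < 1}) :
    G (sSup {x | G x < 1}) = 1 := by
  refine (hG.le_one _).antisymm (not_lt.1 fun hlt => ?_)
  have hright := (hG.2.1 _).mono (s := Set.Ioi (sSup {x | G x < 1})) Set.Ioi_subset_Ici_self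
  obtain ⟨x, hx, hsx⟩ :=
    ((hright.eventually (gt_mem_nhds hlt)).and self_mem_nhdsWithin).exists
  exact (le_csSup hB hx).not_gt hsx

lemma lt_one_iff (hG : IsDistFun G) (hB : BddAbove {x | G x < 1}) {x : ℝ} :
    G x < 1 ↔ x < sSup {x | G x < 1} := by
  refine ⟨fun hx => (le_csSup hB hx).lt_of_ne ?_, fun hx => ?_⟩
  · rintro rfl
    exact hx.ne (hG.apply_sSup_eq_one hB)
  · have hne : {x | G x < 1}.Nonempty := (hG.2.2.1.eventually (gt_mem_nhds one_pos)).exists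
    obtain ⟨y, hy, hxy⟩ := exists_lt_of_lt_csSup hne hx
    exact (hG.1 hxy.le).trans_lt hy

lemma lt_one_of_not_bddAbove (hG : IsDistFun G) (hB : ¬ BddAbove {x | G x < 1}) (x : ℝ) :
    G x < 1 := by
  obtain ⟨y, hy, hxy⟩ := not_bddAbove_iff.1 hB x
  exact (hG.1 hxy.le).trans_lt hy

lemma eventually_lt_one (hG : IsDistFun G) : ∀ᶠ x in endFilter G, G x < 1 := by
  rw [endFilter]
  split_ifs with hB
  · filter_upwards [self_mem_nhdsWithin] with x hx using (hG.lt_one_iff hB).2 hx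
  · exact Eventually.of_forall (hG.lt_one_of_not_bddAbove hB)

lemma tendsto_endFilter_of_forall_lt (hG : IsDistFun G) {ι : Type*} {l : Filter ι} {v : ι → ℝ}
    (hgt : ∀ a, G a < 1 → ∀ᶠ i in l, a < v i) (hlt : ∀ᶠ i in l, G (v i) < 1) :
    Tendsto v l (endFilter G) := by
  rw [endFilter]
  split_ifs with hB
  · refine tendsto_nhdsWithin_iff.2 ⟨tendsto_order.2 ⟨fun a ha => hgt a ?_, fun b hb => ?_⟩, ?_⟩
    · exact (hG.lt_one_iff hB).2 ha
    · filter_upwards [hlt] with i hi using ((hG.lt_one_iff hB).1 hi).trans hb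
    · filter_upwards [hlt] with i hi using (hG.lt_one_iff hB).1 hi
  · exact tendsto_atTop.2 fun a =>
      (hgt a (hG.lt_one_of_not_bddAbove hB a)).mono fun _ h => h.le

lemma lt_one_of_leftLim_lt_one (hG : IsDistFun G) (hend : Tendsto G (endFilter G) (𝓝 1))
    {x : ℝ} (hx : Function.leftLim G x < 1) : G x < 1 := by
  by_cases hB : BddAbove {x | G x < 1}
  · refine (hG.lt_one_iff hB).2 (not_le.1 fun hsx => hx.not_ge ?_)
    rw [← (tendsto_endFilter_iff_leftLim hG.1 hB).1 hend]
    exact hG.1.leftLim hsx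
  · exact hG.lt_one_of_not_bddAbove hB x

lemma exists_leftLim_le_le (hG : IsDistFun G) {c : ℝ} (hc0 : 0 < c) (hc1 : c < 1) :
    ∃ x, Function.leftLim G x ≤ c ∧ c ≤ G x := by
  set S := {y | c ≤ G y}
  have hne : S.Nonempty := ((hG.2.2.2.eventually (lt_mem_nhds hc1)).exists).imp fun _ h => h.le
  have hbdd : BddBelow S := by
    obtain ⟨b, hb⟩ := eventually_atBot.1 (hG.2.2.1.eventually (gt_mem_nhds hc0))
    exact ⟨b, fun y hy => not_lt.1 fun hyb => (hb y hyb.le).not_ge hy⟩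
  have hright : Tendsto G (𝓝[>] (sInf S)) (𝓝 (G (sInf S))) :=
    (hG.2.1 _).mono_left (nhdsWithin_mono _ Set.Ioi_subset_Ici_self)
  refine ⟨sInf S, le_of_tendsto (hG.1.tendsto_leftLim _) ?_, ge_of_tendsto hright ?_⟩
  · filter_upwards [self_mem_nhdsWithin] with y hy
    exact (not_le.1 fun hcy => (csInf_le hbdd hcy).not_gt hy).le
  · filter_upwards [self_mem_nhdsWithin] with y hy
    obtain ⟨z, hz, hzy⟩ := exists_lt_of_csInf_lt hne hy
    exact hz.trans (hG.1 hzy.le)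

lemma tendsto_endFilter_one_of_seq (hG : IsDistFun G) {u : ℕ → ℝ}
    (hlt : ∀ᶠ n in atTop, G (u n) < 1) (hu : Tendsto (fun n => G (u n)) atTop (𝓝 1)) :
    Tendsto G (endFilter G) (𝓝 1) := by
  by_cases hB : BddAbove {x | G x < 1}
  · rw [tendsto_endFilter_iff_leftLim hG.1 hB]
    refine le_antisymm ((hG.1.leftLim_le le_rfl).trans (hG.le_one _)) (le_of_tendsto hu ?_)
    filter_upwards [hlt] with n hn using hG.1.le_leftLim ((hG.lt_one_iff hB).1 hn)
  · rw [endFilter, if_neg hB]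
    exact hG.2.2.2

lemma regularDF_of_tendsto_nat_mul (hG : IsDistFun G) {u : ℕ → ℝ} {τ : ℝ} (hτ : 0 < τ)
    (hlin : Tendsto (fun n : ℕ => (n : ℝ) * (1 - G (u n))) atTop (𝓝 τ)) : RegularDF G := by
  have hs_pos : ∀ᶠ n in atTop, 0 < 1 - G (u n) := by
    filter_upwards [hlin.eventually_const_lt hτ] with n hn
    exact pos_of_mul_pos_right hn n.cast_nonneg
  have hs0 := tendsto_zero_of_tendsto_nat_mul hlin
  have hend : Tendsto G (endFilter G) (𝓝 1) := by
    refine hG.tendsto_endFilter_one_of_seq (hs_pos.mono fun n hn => by linarith) ?_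
    simpa using hs0.const_sub 1
  refine ⟨hend, tendsto_div_of_forall_lt_imp_le hs0 hs_pos
    (tendsto_div_succ_of_tendsto_nat_mul hτ.ne' hlin) ?_ ?_ ?_⟩
  · simpa using hend.const_sub 1
  · filter_upwards [hG.eventually_lt_one] with x hx
    exact ⟨sub_pos.2 hx, sub_le_sub_left (hG.1.leftLim_le le_rfl) 1⟩
  · intro x n hxn
    have := hG.1.le_leftLim (hG.1.reflect_lt (show G (u n) < G x by linarith))
    linarith

lemma exists_tendsto_pow_of_regularDF (hG : IsDistFun G) (hreg : RegularDF G) :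
    ∃ v : ℕ → ℝ, Tendsto (fun n => G (v n) ^ n) atTop (𝓝 (Real.exp (-1))) := by
  have hex : ∀ n : ℕ, ∃ x, 2 ≤ n → Function.leftLim G x ≤ 1 - 1 / n ∧ 1 - 1 / n ≤ G x := by
    intro n
    by_cases hn : 2 ≤ n
    · have hinv : 1 / (n : ℝ) ≤ 1 / 2 := one_div_le_one_div_of_le two_pos (by exact_mod_cast hn)
      have hpos : (0 : ℝ) < 1 / n := one_div_pos.2 (by positivity)
      obtain ⟨x, hx⟩ := hG.exists_leftLim_le_le (c := 1 - 1 / n) (by linarith) (by linarith)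
      exact ⟨x, fun _ => hx⟩
    · exact ⟨0, fun h => absurd h hn⟩
  choose v hv using hex
  have hlt : ∀ᶠ n in atTop, G (v n) < 1 := by
    filter_upwards [eventually_ge_atTop 2] with n hn
    have : (0 : ℝ) < 1 / n := one_div_pos.2 (by positivity)
    exact hG.lt_one_of_leftLim_lt_one hreg.1 ((hv n hn).1.trans_lt (by linarith))
  have hgt : ∀ a, G a < 1 → ∀ᶠ n in atTop, a < v n := by
    intro a ha
    filter_upwards [eventually_ge_atTop 2,
      tendsto_one_div_atTop_nhds_zero_nat.eventually (gt_mem_nhds (sub_pos.2 ha))] with n hn hna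
    exact hG.1.reflect_lt (by linarith [(hv n hn).2])
  have hmul : Tendsto (fun n : ℕ => (n : ℝ) * (1 - G (v n))) atTop (𝓝 1) := by
    refine tendsto_nat_mul_of_le_one_div_le ?_
      (hreg.2.comp (hG.tendsto_endFilter_of_forall_lt hgt hlt))
    filter_upwards [eventually_ge_atTop 2, hlt] with n hn hn1
    obtain ⟨h1, h2⟩ := hv n hn
    exact ⟨by linarith, by linarith, by linarith⟩
  refine ⟨v, ?_⟩
  simpa using Real.tendsto_one_add_pow_exp_of_tendsto (g := fun n => G (v n) - 1)
    (hmul.neg.congr fun n => by ring)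

end IsDistFun

theorem stmt0 (G : ℝ → ℝ) (hG : IsDistFun G) :
    (∃ γ : ℝ, γ ∈ Set.Ioo (0 : ℝ) 1 ∧ ∃ v : ℕ → ℝ,
      Tendsto (fun n : ℕ => G (v n) ^ n) atTop (𝓝 γ)) ↔ RegularDF G := by
  constructor
  · rintro ⟨γ, ⟨hγ0, hγ1⟩, u, hu⟩
    have hlin := tendsto_nat_mul_sub_one_of_tendsto_pow (fun n => hG.nonneg (u n)) hγ0 hu
    exact hG.regularDF_of_tendsto_nat_mul (neg_pos.2 (Real.log_neg hγ0 hγ1))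
      (hlin.neg.congr fun n => by ring)
  · intro hreg
    obtain ⟨v, hv⟩ := hG.exists_tendsto_pow_of_regularDF hreg
    exact ⟨_, ⟨Real.exp_pos _, Real.exp_lt_one_iff.2 (by norm_num)⟩, v, hv⟩
end

section
/- Let G be a regular distribution function and H any distribution function. If there exist γ ∈ (0,1) and a nondecreasing sequence (v_n) with G(v_n)^n → γ and H(v_n)^n → γ, then G and H are strictly tail-equivalent, i.e. they have the same right endpoint and (1 − H(x))/(1 − G(x)) → 1 as x tends to that endpoint from the left. -/
open Filter Topology Classical

/-!
From `F (v n) ^ n → γ ∈ (0, 1)` one gets `n (1 - F (v n)) → -log γ` (take logarithms and use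
`log t ~ t - 1` at `1`), and also that `F x < 1` exactly when `x < v n` for some `n`. Hence `G`
and `H` have the same right endpoint, and `(1 - H (v n)) / (1 - G (v m)) → 1` when `m - n` stays
bounded. For `v k ≤ x < v (k + 1)`, monotonicity squeezes `(1 - H x) / (1 - G x)` between
`(1 - H (v (k + 1))) / (1 - G (v k))` and `(1 - H (v k)) / (1 - G (v (k + 1)-))`, and regularity
of `G` lets the left limit at `v (k + 1)` be replaced by the value there.
-/

open Real Set

lemma tendsto_log_div_sub_one :
    Tendsto (fun t : ℝ => log t / (t - 1)) (𝓝[≠] 1) (𝓝 1) := by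
  have h := hasDerivAt_iff_tendsto_slope.1 (hasDerivAt_log one_ne_zero)
  rw [inv_one] at h
  exact h.congr fun t => by simp [slope_def_field, div_eq_inv_mul]

lemma tendsto_one_sub_div_neg_log :
    Tendsto (fun t : ℝ => (1 - t) / -log t) (𝓝[≠] 1) (𝓝 1) := by
  have h := tendsto_log_div_sub_one.inv₀ one_ne_zero
  rw [inv_one] at h
  exact h.congr fun t => by rw [inv_div, ← neg_div_neg_eq, neg_sub]

section Powers

variable {u : ℕ → ℝ} {γ : ℝ}

lemma eventually_lt_one_of_tendsto_pow (hγ : γ < 1)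
    (h : Tendsto (fun n => u n ^ n) atTop (𝓝 γ)) : ∀ᶠ n in atTop, u n < 1 := by
  filter_upwards [h.eventually (gt_mem_nhds hγ)] with n hn
  by_contra! hle
  exact (one_le_pow₀ hle).not_gt hn

lemma tendsto_nat_mul_one_sub_of_tendsto_pow (hu : ∀ n, 0 ≤ u n) (hγ0 : 0 < γ) (hγ1 : γ < 1)
    (h : Tendsto (fun n => u n ^ n) atTop (𝓝 γ)) :
    Tendsto (fun n : ℕ => (n : ℝ) * (1 - u n)) atTop (𝓝 (-log γ)) := by
  have hlt := eventually_lt_one_of_tendsto_pow hγ1 h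
  have hpos : ∀ᶠ n in atTop, 0 < u n := by
    filter_upwards [h.eventually (lt_mem_nhds hγ0), eventually_ne_atTop 0] with n hn hn0
    exact (hu n).lt_of_ne fun h0 => by rw [← h0, zero_pow hn0] at hn; exact hn.false
  have hlog : Tendsto (fun n : ℕ => (n : ℝ) * log (u n)) atTop (𝓝 (log γ)) :=
    ((continuousAt_log hγ0.ne').tendsto.comp h).congr fun n => by simp [log_pow]
  have hlog0 : Tendsto (fun n => log (u n)) atTop (𝓝 0) := by
    have h' := hlog.mul tendsto_one_div_atTop_nhds_zero_nat
    rw [mul_zero] at h'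
    refine h'.congr' ?_
    filter_upwards [eventually_ne_atTop 0] with n hn
    field_simp
  have hone : Tendsto u atTop (𝓝[≠] 1) := by
    refine tendsto_nhdsWithin_of_tendsto_nhds_of_eventually_within _ ?_ (hlt.mono fun _ => ne_of_lt)
    have h' := (continuous_exp.tendsto 0).comp hlog0
    rw [exp_zero] at h'
    refine h'.congr' ?_
    filter_upwards [hpos] with n hn using exp_log hn
  have h' := hlog.neg.mul (tendsto_one_sub_div_neg_log.comp hone)
  rw [mul_one] at h'
  refine h'.congr' ?_
  filter_upwards [hpos, hlt] with n h0 h1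
  have : log (u n) ≠ 0 := (log_neg h0 h1).ne
  simp only [Function.comp_apply]
  field_simp

end Powers

section Ratios

variable {p q : ℕ → ℝ} {c : ℝ}

lemma tendsto_nat_mul_comp_succ (h : Tendsto (fun n : ℕ => (n : ℝ) * p n) atTop (𝓝 c)) :
    Tendsto (fun n : ℕ => (n : ℝ) * p (n + 1)) atTop (𝓝 c) := by
  have h' := (h.comp (tendsto_add_atTop_nat 1)).mul (tendsto_natCast_div_add_atTop (1 : ℝ))
  rw [mul_one] at h'
  refine h'.congr fun n => ?_
  simp only [Function.comp_apply]
  push_cast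
  field_simp

lemma tendsto_div_of_tendsto_nat_mul (hp : Tendsto (fun n : ℕ => (n : ℝ) * p n) atTop (𝓝 c))
    (hq : Tendsto (fun n : ℕ => (n : ℝ) * q n) atTop (𝓝 c)) (hc : c ≠ 0) :
    Tendsto (fun n => p n / q n) atTop (𝓝 1) := by
  have h' := hp.div hq hc
  rw [div_self hc] at h'
  refine h'.congr' ?_
  filter_upwards [eventually_ne_atTop 0] with n hn
  exact mul_div_mul_left _ _ (Nat.cast_ne_zero.2 hn)

end Ratios

lemma tendsto_of_forall_eventually_exists_mem_Icc {α β : Type*} [TopologicalSpace β]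
    [LinearOrder β] [OrderTopology β] {L : Filter α} {f : α → β} {a b : ℕ → β} {c : β}
    (ha : Tendsto a atTop (𝓝 c)) (hb : Tendsto b atTop (𝓝 c))
    (h : ∀ N, ∀ᶠ x in L, ∃ n ≥ N, f x ∈ Icc (a n) (b n)) : Tendsto f L (𝓝 c) := by
  refine tendsto_order.2 ⟨fun c' hc' => ?_, fun c' hc' => ?_⟩
  · obtain ⟨N, hN⟩ := eventually_atTop.1 (ha.eventually (lt_mem_nhds hc'))
    filter_upwards [h N] with x ⟨n, hn, hx⟩ using (hN n hn).trans_le hx.1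
  · obtain ⟨N, hN⟩ := eventually_atTop.1 (hb.eventually (gt_mem_nhds hc'))
    filter_upwards [h N] with x ⟨n, hn, hx⟩ using hx.2.trans_lt (hN n hn)

lemma exists_ge_mem_Ico_of_monotone {α : Type*} [LinearOrder α] {v : ℕ → α} (hv : Monotone v)
    {N m : ℕ} {x : α} (hN : v N ≤ x) (hm : x < v m) :
    ∃ n ≥ N, x ∈ Ico (v n) (v (n + 1)) := by
  have hex : ∃ m, x < v m := ⟨m, hm⟩
  have hN' : N < Nat.find hex := by
    by_contra! hle
    exact (Nat.find_spec hex).not_ge ((hv hle).trans hN)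
  refine ⟨Nat.find hex - 1, by omega, not_lt.1 (Nat.find_min hex (by omega)), ?_⟩
  rw [Nat.sub_add_cancel (by omega)]
  exact Nat.find_spec hex

namespace IsDistFun

variable {F : ℝ → ℝ}

lemma nonneg_s1 (hF : IsDistFun F) (x : ℝ) : 0 ≤ F x :=
  le_of_tendsto hF.2.2.1 ((eventually_le_atBot x).mono fun _ hy => hF.1 hy)

lemma le_one_s1 (hF : IsDistFun F) (x : ℝ) : F x ≤ 1 :=
  ge_of_tendsto hF.2.2.2 ((eventually_ge_atTop x).mono fun _ hy => hF.1 hy)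

lemma nonempty_setOf_lt_one (hF : IsDistFun F) : {x | F x < 1}.Nonempty :=
  (hF.2.2.1.eventually (gt_mem_nhds one_pos)).exists

lemma setOf_lt_one_eq_Iio (hF : IsDistFun F) (hb : BddAbove {x | F x < 1}) :
    {x | F x < 1} = Iio (sSup {x | F x < 1}) := by
  ext x
  refine ⟨fun hx => ?_, fun hx => ?_⟩
  · have hright : ContinuousWithinAt F (Ioi x) x := (hF.2.1 x).mono Ioi_subset_Ici_self
    obtain ⟨y, hy, hxy⟩ := ((hright.eventually (gt_mem_nhds hx)).and self_mem_nhdsWithin).exists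
    exact hxy.trans_le (le_csSup hb hy)
  · obtain ⟨y, hy, hxy⟩ := exists_lt_of_lt_csSup hF.nonempty_setOf_lt_one hx
    exact (hF.1 hxy.le).trans_lt hy

lemma setOf_lt_one_eq_univ (hF : IsDistFun F) (hb : ¬BddAbove {x | F x < 1}) :
    {x | F x < 1} = univ := by
  refine eq_univ_of_forall fun x => ?_
  obtain ⟨y, hy, hxy⟩ := not_bddAbove_iff.1 hb x
  exact (hF.1 hxy.le).trans_lt hy

lemma hasBasis_endFilter (hF : IsDistFun F) :
    (endFilter F).HasBasis (fun a => F a < 1) (fun a => {x | a < x ∧ F x < 1}) := by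
  unfold endFilter
  split_ifs with hb
  · have hS := hF.setOf_lt_one_eq_Iio hb
    refine (nhdsLT_basis _).congr (fun a => ?_) fun a _ => ?_
    · exact (Set.ext_iff.1 hS a).symm
    · ext x
      exact and_congr_right fun _ => (Set.ext_iff.1 hS x).symm
  · have hS := hF.setOf_lt_one_eq_univ hb
    refine atTop_basis_Ioi.congr (fun a => ?_) fun a _ => ?_
    · simpa using (Set.ext_iff.1 hS a).symm
    · ext x
      simpa using fun _ => Set.ext_iff.1 hS x

lemma eventually_lt_one_endFilter (hF : IsDistFun F) : ∀ᶠ x in endFilter F, F x < 1 := by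
  obtain ⟨a, ha⟩ := hF.nonempty_setOf_lt_one
  exact hF.hasBasis_endFilter.eventually_iff.2 ⟨a, ha, fun _ hx => hx.2⟩

lemma eventually_ge_endFilter (hF : IsDistFun F) {a : ℝ} (ha : F a < 1) :
    ∀ᶠ x in endFilter F, a ≤ x :=
  hF.hasBasis_endFilter.eventually_iff.2 ⟨a, ha, fun _ hx => hx.1.le⟩

lemma tendsto_endFilter (hF : IsDistFun F) {u : ℕ → ℝ} (hu : Monotone u)
    (hlt : ∀ᶠ n in atTop, F (u n) < 1) (hex : ∀ a, F a < 1 → ∃ n, a < u n) :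
    Tendsto u atTop (endFilter F) := by
  refine hF.hasBasis_endFilter.tendsto_right_iff.2 fun a ha => ?_
  obtain ⟨n, hn⟩ := hex a ha
  filter_upwards [eventually_ge_atTop n, hlt] with m hm hm' using ⟨hn.trans_le (hu hm), hm'⟩

end IsDistFun

section PowerLimit

variable {F : ℝ → ℝ} {v : ℕ → ℝ} {γ : ℝ}

lemma exists_lt_of_tendsto_pow (hF0 : ∀ x, 0 ≤ F x) (hF : Monotone F) (hγ : 0 < γ)
    (h : Tendsto (fun n => F (v n) ^ n) atTop (𝓝 γ)) {a : ℝ} (ha : F a < 1) :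
    ∃ n, a < v n := by
  by_contra! hle
  have h0 : Tendsto (fun n => F (v n) ^ n) atTop (𝓝 0) :=
    squeeze_zero (fun n => pow_nonneg (hF0 _) n)
      (fun n => pow_le_pow_left₀ (hF0 _) (hF (hle n)) n)
      (tendsto_pow_atTop_nhds_zero_of_lt_one (hF0 a) ha)
  exact hγ.ne' (tendsto_nhds_unique h h0)

lemma setOf_lt_one_eq_of_tendsto_pow (hF0 : ∀ x, 0 ≤ F x) (hF : Monotone F) (hv : Monotone v)
    (hγ0 : 0 < γ) (hγ1 : γ < 1) (h : Tendsto (fun n => F (v n) ^ n) atTop (𝓝 γ)) :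
    {x | F x < 1} = {x | ∃ n, x < v n} := by
  ext x
  refine ⟨exists_lt_of_tendsto_pow hF0 hF hγ0 h, fun ⟨n, hn⟩ => ?_⟩
  obtain ⟨m, hm⟩ :=
    ((eventually_ge_atTop n).and (eventually_lt_one_of_tendsto_pow hγ1 h)).exists
  exact (hF (hn.le.trans (hv hm.1))).trans_lt hm.2

end PowerLimit

lemma tail_ratio_mem_Icc {G H : ℝ → ℝ} (hG : Monotone G) (hH : Monotone H)
    (hH1 : ∀ x, H x ≤ 1) {a b x : ℝ} (hx : x ∈ Ico a b) (hGb : G b < 1) :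
    (1 - H x) / (1 - G x) ∈
      Icc ((1 - H b) / (1 - G a)) ((1 - H a) / (1 - Function.leftLim G b)) := by
  have hGx : G x ≤ Function.leftLim G b := hG.le_leftLim hx.2
  have hGb' : Function.leftLim G b ≤ G b := hG.leftLim_le le_rfl
  constructor
  · refine div_le_div₀ (by linarith [hH1 x]) (by linarith [hH hx.2.le]) (by linarith) ?_
    linarith [hG hx.1]
  · refine div_le_div₀ (by linarith [hH1 a]) (by linarith [hH hx.1]) (by linarith) (by linarith)

lemma tendsto_div_one_sub_leftLim {G : ℝ → ℝ} {L : Filter ℝ} {w p : ℕ → ℝ}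
    (hreg : Tendsto (fun x => (1 - Function.leftLim G x) / (1 - G x)) L (𝓝 1))
    (hw : Tendsto w atTop L) (hp : Tendsto (fun n => p n / (1 - G (w n))) atTop (𝓝 1))
    (hG : ∀ᶠ n in atTop, G (w n) ≠ 1) :
    Tendsto (fun n => p n / (1 - Function.leftLim G (w n))) atTop (𝓝 1) := by
  have h := hp.div (hreg.comp hw) one_ne_zero
  rw [div_one] at h
  refine h.congr' ?_
  filter_upwards [hG] with n hn
  exact div_div_div_cancel_right₀ (sub_ne_zero.2 hn.symm) _ _

theorem stmt1 (G H : ℝ → ℝ) (hG : IsDistFun G) (hGreg : RegularDF G)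
    (hH : IsDistFun H) (γ : ℝ) (hγ : γ ∈ Set.Ioo (0 : ℝ) 1)
    (v : ℕ → ℝ) (hmono : Monotone v)
    (hGv : Tendsto (fun n : ℕ => G (v n) ^ n) atTop (𝓝 γ))
    (hHv : Tendsto (fun n : ℕ => H (v n) ^ n) atTop (𝓝 γ)) :
    StrictTailEquiv G H := by
  obtain ⟨hγ0, hγ1⟩ := hγ
  have hGS := setOf_lt_one_eq_of_tendsto_pow hG.nonneg_s1 hG.1 hmono hγ0 hγ1 hGv
  have hHS := setOf_lt_one_eq_of_tendsto_pow hH.nonneg_s1 hH.1 hmono hγ0 hγ1 hHv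
  refine ⟨by rw [hGS, hHS], by rw [hGS, hHS], ?_⟩
  have hc : -log γ ≠ 0 := (neg_pos.2 (log_neg hγ0 hγ1)).ne'
  have hGn := tendsto_nat_mul_one_sub_of_tendsto_pow (fun _ => hG.nonneg_s1 _) hγ0 hγ1 hGv
  have hHn := tendsto_nat_mul_one_sub_of_tendsto_pow (fun _ => hH.nonneg_s1 _) hγ0 hγ1 hHv
  have hvG : ∀ a, G a < 1 → ∃ n, a < v n := fun _ =>
    exists_lt_of_tendsto_pow hG.nonneg_s1 hG.1 hγ0 hGv
  obtain ⟨N₀, hN₀⟩ := eventually_atTop.1 (eventually_lt_one_of_tendsto_pow hγ1 hGv)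
  have hlower : Tendsto (fun n => (1 - H (v (n + 1))) / (1 - G (v n))) atTop (𝓝 1) :=
    tendsto_div_of_tendsto_nat_mul (tendsto_nat_mul_comp_succ hHn) hGn hc
  have hv : Tendsto v atTop (endFilter G) :=
    hG.tendsto_endFilter hmono (eventually_atTop.2 ⟨N₀, hN₀⟩) hvG
  have hupper : Tendsto (fun n => (1 - H (v n)) / (1 - Function.leftLim G (v (n + 1))))
      atTop (𝓝 1) :=
    tendsto_div_one_sub_leftLim hGreg.2 (hv.comp (tendsto_add_atTop_nat 1))
      (tendsto_div_of_tendsto_nat_mul hHn (tendsto_nat_mul_comp_succ hGn) hc)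
      (eventually_atTop.2 ⟨N₀, fun n hn => (hN₀ (n + 1) (by omega)).ne⟩)
  refine tendsto_of_forall_eventually_exists_mem_Icc hlower hupper fun N => ?_
  filter_upwards [hG.eventually_ge_endFilter (hN₀ (max N N₀) (le_max_right _ _)),
    hG.eventually_lt_one_endFilter] with x hNx hx
  obtain ⟨m, hm⟩ := hvG x hx
  obtain ⟨n, hn, hxn⟩ := exists_ge_mem_Ico_of_monotone hmono hNx hm
  exact ⟨n, le_of_max_le_left hn,
    tail_ratio_mem_Icc hG.1 hH.1 hH.le_one_s1 hxn (hN₀ (n + 1) (by omega))⟩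
end

section
/- Let (X_j) be a stationary α-mixing sequence with mixing coefficients α(m), γ ∈ (0,1), v_n = inf{x : P(M_n ≤ x) ≥ γ}. If α(r) = O(r^{−β}) for some β > 0, then for every δ < β/(1+β), n^δ·P(X_1 > v_n) → 0 as n → ∞. -/
open Filter Topology MeasureTheory

/-- The probability of a set, as a real number. -/
noncomputable def pr {Ω : Type*} [MeasurableSpace Ω] (P : Measure Ω) (s : Set Ω) : ℝ :=
  (P s).toReal

/-- `maxOnSeq X a b ω = max_{a ≤ j ≤ b} X_j(ω)` (as a supremum of the finite image). -/
noncomputable def maxOnSeq {Ω : Type*} (X : ℕ → Ω → ℝ) (a b : ℕ) (ω : Ω) : ℝ :=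
  sSup ((fun j => X j ω) '' Set.Icc a b)

/-- `Zfun X m j ω = max {X_m, X_{2m}, …, X_{jm}}(ω)`. -/
noncomputable def Zfun {Ω : Type*} (X : ℕ → Ω → ℝ) (m j : ℕ) (ω : Ω) : ℝ :=
  sSup ((fun i => X (i * m) ω) '' Set.Icc 1 j)

/-- Strict stationarity: all finite-dimensional distributions are shift invariant. -/
def Stationary {Ω : Type*} [MeasurableSpace Ω] (P : Measure Ω) (X : ℕ → Ω → ℝ) : Prop :=
  ∀ s h : ℕ,
    Measure.map (fun ω => fun i : Fin s => X (1 + (i : ℕ) + h) ω) P =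
      Measure.map (fun ω => fun i : Fin s => X (1 + (i : ℕ)) ω) P

/-- The strong (α-) mixing coefficient of the sequence `X` under `P`. -/
noncomputable def alphaMix {Ω : Type*} [MeasurableSpace Ω] (P : Measure Ω)
    (X : ℕ → Ω → ℝ) (r : ℕ) : ℝ :=
  sSup {d : ℝ | ∃ n : ℕ, ∃ A B : Set Ω,
    MeasurableSet[⨆ i ∈ Set.Icc 1 n, MeasurableSpace.comap (X i) inferInstance] A ∧
    MeasurableSet[⨆ i ∈ Set.Ici (n + r), MeasurableSpace.comap (X i) inferInstance] B ∧
    d = |pr P (A ∩ B) - pr P A * pr P B|}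

/-!
Cut `{1, …, n}` into `k = ⌊n / m⌋` blocks of length `m = ⌈n ^ θ⌉`, where
`1 / (1 + β) < θ < 1 - δ`. On `{M_n ≤ v_n}` all of `X_m, X_{2m}, …, X_{km}` are `≤ v_n`, and
peeling these off one at a time costs `α(m)` each, so with `q = P(X_1 ≤ v_n)`
`γ ≤ P(M_n ≤ v_n) ≤ q ^ k + k α(m)`.
As `k α(m) = O(n ^ (1 - θ (1 + β))) → 0`, eventually `q ^ k ≥ γ / 2`, hence
`k (1 - q) ≤ log (2 / γ)`, i.e. `P(X_1 > v_n) = O(n ^ (θ - 1)) = o(n ^ (-δ))`.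
-/

open Set ProbabilityTheory

lemma abs_measureReal_inter_sub_mul_le_one {Ω : Type*} [MeasurableSpace Ω] (P : Measure Ω)
    [IsProbabilityMeasure P] (A B : Set Ω) : |P.real (A ∩ B) - P.real A * P.real B| ≤ 1 :=
  abs_sub_le_of_nonneg_of_le measureReal_nonneg measureReal_le_one
    (mul_nonneg measureReal_nonneg measureReal_nonneg)
    (mul_le_one₀ measureReal_le_one measureReal_nonneg measureReal_le_one)

section Mixing

variable {Ω : Type*} [MeasurableSpace Ω] (P : Measure Ω) [IsProbabilityMeasure P]
  (X : ℕ → Ω → ℝ)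

lemma abs_measureReal_inter_sub_mul_le_alphaMix {r n : ℕ} {A B : Set Ω}
    (hA : MeasurableSet[⨆ i ∈ Icc 1 n, MeasurableSpace.comap (X i) inferInstance] A)
    (hB : MeasurableSet[⨆ i ∈ Ici (n + r), MeasurableSpace.comap (X i) inferInstance] B) :
    |P.real (A ∩ B) - P.real A * P.real B| ≤ alphaMix P X r := by
  refine le_csSup ⟨1, ?_⟩ ⟨n, A, B, hA, hB, rfl⟩
  rintro d ⟨-, A, B, -, -, rfl⟩
  exact abs_measureReal_inter_sub_mul_le_one P A B

lemma alphaMix_nonneg (r : ℕ) : 0 ≤ alphaMix P X r := by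
  simpa using abs_measureReal_inter_sub_mul_le_alphaMix P X (r := r) (n := 0)
    (A := ∅) (B := ∅) (MeasurableSpace.measurableSet_empty _)
    (MeasurableSpace.measurableSet_empty _)

end Mixing

lemma Stationary.identDistrib {Ω : Type*} [MeasurableSpace Ω] {P : Measure Ω}
    {X : ℕ → Ω → ℝ} (hstat : Stationary P X) (hmeas : ∀ i, Measurable (X i)) {k : ℕ}
    (hk : 1 ≤ k) : IdentDistrib (X k) (X 1) P P where
  aemeasurable_fst := (hmeas k).aemeasurable
  aemeasurable_snd := (hmeas 1).aemeasurable
  map_eq := by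
    have h := congrArg (Measure.map (fun f : Fin 1 → ℝ => f 0)) (hstat 1 (k - 1))
    rw [Measure.map_map (measurable_pi_apply 0) (measurable_pi_lambda _ fun _ => hmeas _),
      Measure.map_map (measurable_pi_apply 0) (measurable_pi_lambda _ fun _ => hmeas _)] at h
    convert h using 2 <;> ext ω <;> simp [Nat.add_sub_cancel' hk]

lemma sSup_image_Icc_le_iff (f : ℕ → ℝ) {a b : ℕ} (hab : a ≤ b) (x : ℝ) :
    sSup (f '' Icc a b) ≤ x ↔ ∀ j ∈ Icc a b, f j ≤ x := by
  rw [csSup_le_iff ((finite_Icc a b).image f).bddAbove ((nonempty_Icc.2 hab).image f),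
    forall_mem_image]

section Maxima

variable {Ω : Type*} (X : ℕ → Ω → ℝ)

lemma maxOnSeq_le_iff {a b : ℕ} (hab : a ≤ b) (ω : Ω) (x : ℝ) :
    maxOnSeq X a b ω ≤ x ↔ ∀ j ∈ Icc a b, X j ω ≤ x :=
  sSup_image_Icc_le_iff _ hab x

lemma Zfun_le_iff (m : ℕ) {j : ℕ} (hj : 1 ≤ j) (ω : Ω) (x : ℝ) :
    Zfun X m j ω ≤ x ↔ ∀ i ∈ Icc 1 j, X (i * m) ω ≤ x :=
  sSup_image_Icc_le_iff _ hj x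

lemma Zfun_one (m : ℕ) (ω : Ω) : Zfun X m 1 ω = X m ω := by
  simp [Zfun]

lemma Zfun_succ_le_iff (m : ℕ) {j : ℕ} (hj : 1 ≤ j) (ω : Ω) (x : ℝ) :
    Zfun X m (j + 1) ω ≤ x ↔ Zfun X m j ω ≤ x ∧ X ((j + 1) * m) ω ≤ x := by
  rw [Zfun_le_iff X m (by omega), Zfun_le_iff X m hj]
  constructor
  · intro h
    exact ⟨fun i hi => h i ⟨hi.1, hi.2.trans j.le_succ⟩, h (j + 1) ⟨by omega, le_rfl⟩⟩
  · rintro ⟨h, hlast⟩ i ⟨hi1, hij⟩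
    rcases hij.lt_or_eq with hij | rfl
    · exact h i ⟨hi1, by omega⟩
    · exact hlast

lemma Zfun_le_of_maxOnSeq_le {n m k : ℕ} (hm : 1 ≤ m) (hk : 1 ≤ k) (hkm : k * m ≤ n)
    {ω : Ω} {x : ℝ} (h : maxOnSeq X 1 n ω ≤ x) : Zfun X m k ω ≤ x := by
  rw [maxOnSeq_le_iff X (hk.trans (le_mul_of_one_le_right' hm |>.trans hkm))] at h
  rw [Zfun_le_iff X m hk]
  exact fun i ⟨hi1, hik⟩ =>
    h _ ⟨Nat.one_le_iff_ne_zero.2 (Nat.mul_ne_zero (by omega) (by omega)),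
      (Nat.mul_le_mul_right m hik).trans hkm⟩

lemma measurableSet_Zfun_le {m j : ℕ} (hm : 1 ≤ m) (hj : 1 ≤ j) (t : ℝ) :
    MeasurableSet[⨆ i ∈ Icc 1 (j * m), MeasurableSpace.comap (X i) inferInstance]
      {ω | Zfun X m j ω ≤ t} := by
  have : {ω | Zfun X m j ω ≤ t} = ⋂ i ∈ Icc 1 j, {ω | X (i * m) ω ≤ t} := by
    ext ω
    simp [Zfun_le_iff X m hj]
  rw [this]
  refine .biInter (to_countable _) fun i ⟨hi1, hij⟩ => ?_
  refine le_iSup₂ (f := fun i (_ : i ∈ Icc 1 (j * m)) =>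
    MeasurableSpace.comap (X i) inferInstance) (i * m) ⟨?_, Nat.mul_le_mul_right m hij⟩ _
    ⟨Iic t, measurableSet_Iic, rfl⟩
  exact Nat.one_le_iff_ne_zero.2 (Nat.mul_ne_zero (by omega) (by omega))

variable [MeasurableSpace Ω]

lemma measurable_maxOnSeq (hmeas : ∀ i, Measurable (X i)) {a b : ℕ} (hab : a ≤ b) :
    Measurable (maxOnSeq X a b) := by
  refine measurable_of_Iic fun x => ?_
  have : maxOnSeq X a b ⁻¹' Iic x = ⋂ j ∈ Icc a b, {ω | X j ω ≤ x} := by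
    ext ω
    simp [maxOnSeq_le_iff X hab]
  rw [this]
  exact .biInter (to_countable _) fun j _ => hmeas j measurableSet_Iic

end Maxima

theorem measureReal_Zfun_le_le {Ω : Type*} [MeasurableSpace Ω] {P : Measure Ω}
    [IsProbabilityMeasure P] {X : ℕ → Ω → ℝ} (hmeas : ∀ i, Measurable (X i))
    (hstat : Stationary P X) {m : ℕ} (hm : 1 ≤ m) (t : ℝ) {j : ℕ} (hj : 1 ≤ j) :
    P.real {ω | Zfun X m j ω ≤ t} ≤ P.real {ω | X 1 ω ≤ t} ^ j + j * alphaMix P X m := by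
  set q := P.real {ω | X 1 ω ≤ t}
  have hmarg : ∀ k, 1 ≤ k → P.real {ω | X k ω ≤ t} = q := fun k hk =>
    congrArg ENNReal.toReal ((hstat.identDistrib hmeas hk).measure_mem_eq measurableSet_Iic)
  have hα := alphaMix_nonneg P X m
  induction j, hj using Nat.le_induction with
  | base => simpa [Zfun_one, hmarg m hm] using hα
  | succ j hj ih =>
    have hsplit : {ω | Zfun X m (j + 1) ω ≤ t}
        = {ω | Zfun X m j ω ≤ t} ∩ {ω | X ((j + 1) * m) ω ≤ t} := by
      ext ω
      exact Zfun_succ_le_iff X m hj ω t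
    -- the two blocks are separated by a gap of length `m`
    have hcov := abs_measureReal_inter_sub_mul_le_alphaMix P X (r := m)
      (B := {ω | X ((j + 1) * m) ω ≤ t})
      (measurableSet_Zfun_le X hm hj t)
      (show MeasurableSet[⨆ i ∈ Ici (j * m + m), _] _ from
        le_iSup₂ (f := fun i (_ : i ∈ Ici (j * m + m)) =>
          MeasurableSpace.comap (X i) inferInstance) ((j + 1) * m) (by simp [add_mul]) _
          ⟨Iic t, measurableSet_Iic, rfl⟩)
    rw [← hsplit, hmarg _ (Nat.one_le_iff_ne_zero.2 (by positivity))] at hcov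
    have hq : q ≤ 1 := measureReal_le_one
    calc P.real {ω | Zfun X m (j + 1) ω ≤ t}
        ≤ P.real {ω | Zfun X m j ω ≤ t} * q + alphaMix P X m := by linarith [(abs_le.1 hcov).2]
      _ ≤ (q ^ j + j * alphaMix P X m) * q + alphaMix P X m := by gcongr
      _ ≤ q ^ (j + 1) + ((j + 1 : ℕ) : ℝ) * alphaMix P X m := by
        rw [pow_succ]
        push_cast
        linarith [mul_le_mul_of_nonneg_left hq (mul_nonneg (Nat.cast_nonneg j) hα)]

theorem le_cdf_sInf (μ : Measure ℝ) [IsProbabilityMeasure μ] {γ : ℝ} (hγ : γ ∈ Ioo 0 1) :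
    γ ≤ cdf μ (sInf {x | γ ≤ cdf μ x}) := by
  set S := {x | γ ≤ cdf μ x}
  have hS : S.Nonempty := ((tendsto_cdf_atTop μ).eventually (eventually_ge_nhds hγ.2)).exists
  obtain ⟨a, ha⟩ := eventually_atBot.1 ((tendsto_cdf_atBot μ).eventually (eventually_lt_nhds hγ.1))
  have hbdd : BddBelow S := ⟨a, fun x hx => le_of_not_ge fun hxa => (ha x hxa).not_ge hx⟩
  -- `S` is an up-set, so it contains `(sInf S, ∞)`; conclude by right continuity of the cdf
  have hright : ∀ᶠ x in 𝓝[>] sInf S, γ ≤ cdf μ x := by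
    filter_upwards [self_mem_nhdsWithin] with x hx
    obtain ⟨s, hsS, hsx⟩ := exists_lt_of_csInf_lt hS hx
    exact hsS.trans ((cdf μ).mono hsx.le)
  exact ge_of_tendsto (((cdf μ).right_continuous _).mono Ioi_subset_Ici_self) hright

theorem le_measureReal_le_sInf {Ω : Type*} [MeasurableSpace Ω] (P : Measure Ω)
    [IsProbabilityMeasure P] {Y : Ω → ℝ} (hY : Measurable Y) {γ : ℝ} (hγ : γ ∈ Ioo 0 1) :
    γ ≤ P.real {ω | Y ω ≤ sInf {x | γ ≤ P.real {ω | Y ω ≤ x}}} := by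
  have := Measure.isProbabilityMeasure_map (μ := P) hY.aemeasurable
  have hcdf : ∀ x, cdf (P.map Y) x = P.real {ω | Y ω ≤ x} := fun x => by
    rw [cdf_eq_real, map_measureReal_apply hY measurableSet_Iic]
    rfl
  simp_rw [← hcdf]
  exact le_cdf_sInf _ hγ

lemma mul_one_sub_le_neg_log_of_le_pow {a q : ℝ} {k : ℕ} (ha : 0 < a) (hq : 0 ≤ q)
    (h : a ≤ q ^ k) : k * (1 - q) ≤ -Real.log a := by
  have hexp : q ^ k ≤ Real.exp (k * (q - 1)) := by
    rw [Real.exp_nat_mul]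
    exact pow_le_pow_left₀ hq (by linarith [Real.add_one_le_exp (q - 1)]) k
  have := (Real.log_le_iff_le_exp ha).2 (h.trans hexp)
  linarith

lemma exists_block_exponent {β δ : ℝ} (hβ : 0 < β) (hδ : δ < β / (1 + β)) :
    ∃ θ, 0 < θ ∧ θ < 1 ∧ θ < 1 - δ ∧ 1 < θ * (1 + β) := by
  have hβ1 : 0 < 1 + β := by linarith
  have hsum : 1 / (1 + β) + β / (1 + β) = 1 := by rw [← add_div, div_self hβ1.ne']
  obtain ⟨θ, hθβ, hθ⟩ := exists_between
    (lt_min ((div_lt_one hβ1).2 (by linarith)) (by linarith) : 1 / (1 + β) < min 1 (1 - δ))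
  exact ⟨θ, (by positivity : 0 < 1 / (1 + β)).trans hθβ, hθ.trans_le (min_le_left _ _),
    hθ.trans_le (min_le_right _ _), (div_lt_iff₀ hβ1).1 hθβ⟩

section Blocks

variable {θ : ℝ}

lemma div_ceil_rpow_le (n : ℕ) : ((n / ⌈(n : ℝ) ^ θ⌉₊ : ℕ) : ℝ) ≤ (n : ℝ) ^ (1 - θ) := by
  rcases n.eq_zero_or_pos with rfl | hn
  · simpa using Real.rpow_nonneg le_rfl _
  have hn' : (0 : ℝ) < n := by exact_mod_cast hn
  calc ((n / ⌈(n : ℝ) ^ θ⌉₊ : ℕ) : ℝ) ≤ n / ⌈(n : ℝ) ^ θ⌉₊ := Nat.cast_div_le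
    _ ≤ n / (n : ℝ) ^ θ := by gcongr; exact Nat.le_ceil _
    _ = (n : ℝ) ^ (1 - θ) := by rw [Real.rpow_sub hn', Real.rpow_one]

lemma rpow_div_four_le_div_ceil_rpow (hθ : 0 ≤ θ) {n : ℕ} (hn : 4 ≤ (n : ℝ) ^ (1 - θ)) :
    (n : ℝ) ^ (1 - θ) / 4 ≤ (n / ⌈(n : ℝ) ^ θ⌉₊ : ℕ) := by
  rcases n.eq_zero_or_pos with rfl | hn0
  · rw [Nat.cast_zero] at hn
    linarith [Real.zero_rpow_le_one (1 - θ)]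
  have hn' : (1 : ℝ) ≤ n := by exact_mod_cast hn0
  have hpow : (1 : ℝ) ≤ (n : ℝ) ^ θ := Real.one_le_rpow hn' hθ
  set m := ⌈(n : ℝ) ^ θ⌉₊
  set k := n / m
  have hm : (m : ℝ) ≤ 2 * (n : ℝ) ^ θ := by linarith [Nat.ceil_lt_add_one (zero_le_one.trans hpow)]
  have hnk : (n : ℝ) < m * (k + 1) := by exact_mod_cast Nat.lt_mul_div_succ n (by positivity)
  have : (n : ℝ) ^ (1 - θ) < 2 * (k + 1) := by
    rw [Real.rpow_sub (by positivity), Real.rpow_one, div_lt_iff₀ (by positivity)]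
    nlinarith
  linarith

end Blocks

theorem tendsto_div_ceil_rpow_mul_alphaMix {Ω : Type*} [MeasurableSpace Ω] {P : Measure Ω}
    [IsProbabilityMeasure P] {X : ℕ → Ω → ℝ} {β c θ : ℝ} (hβ : 0 ≤ β)
    (hα : ∀ r : ℕ, 1 ≤ r → alphaMix P X r ≤ c * (r : ℝ) ^ (-β)) (hθ : 1 < θ * (1 + β)) :
    Tendsto (fun n : ℕ => ((n / ⌈(n : ℝ) ^ θ⌉₊ : ℕ) : ℝ) * alphaMix P X ⌈(n : ℝ) ^ θ⌉₊)
      atTop (𝓝 0) := by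
  have hc : 0 ≤ c := by simpa using (alphaMix_nonneg P X 1).trans (hα 1 le_rfl)
  have hθ0 : 0 < θ := pos_of_mul_pos_left (one_pos.trans hθ) (by linarith)
  have hdecay : Tendsto (fun n : ℕ => c * (n : ℝ) ^ (-(θ * (1 + β) - 1))) atTop (𝓝 0) := by
    rw [← mul_zero c]
    exact ((tendsto_rpow_neg_atTop (by linarith)).comp tendsto_natCast_atTop_atTop).const_mul c
  refine squeeze_zero' (.of_forall fun n => mul_nonneg (Nat.cast_nonneg _) (alphaMix_nonneg P X _))
    ?_ hdecay
  filter_upwards [eventually_ge_atTop 1] with n hn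
  have hn' : (0 : ℝ) < n := by exact_mod_cast hn
  have hpow : 0 < (n : ℝ) ^ θ := by positivity
  calc ((n / ⌈(n : ℝ) ^ θ⌉₊ : ℕ) : ℝ) * alphaMix P X ⌈(n : ℝ) ^ θ⌉₊
      ≤ (n : ℝ) ^ (1 - θ) * (c * ((n : ℝ) ^ θ) ^ (-β)) := by
        refine mul_le_mul (div_ceil_rpow_le n) ((hα _ (Nat.one_le_iff_ne_zero.2
          (Nat.ceil_pos.2 hpow).ne')).trans ?_) (alphaMix_nonneg P X _) (by positivity)
        exact mul_le_mul_of_nonneg_left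
          (Real.rpow_le_rpow_of_nonpos hpow (Nat.le_ceil _) (neg_nonpos.2 hβ)) hc
    _ = c * (n : ℝ) ^ (-(θ * (1 + β) - 1)) := by
        rw [← Real.rpow_mul hn'.le, mul_left_comm, ← Real.rpow_add hn']
        ring_nf

section Tail

variable {Ω : Type*} [MeasurableSpace Ω] {P : Measure Ω} [IsProbabilityMeasure P]
  {X : ℕ → Ω → ℝ} (hmeas : ∀ i, Measurable (X i)) (hstat : Stationary P X)
  {γ : ℝ} (hγ : γ ∈ Ioo 0 1) {n : ℕ} {v : ℝ}
  (hv : v = sInf {x | γ ≤ P.real {ω | maxOnSeq X 1 n ω ≤ x}})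
include hmeas hstat hγ hv

theorem mul_measureReal_lt_quantile_le {m k : ℕ} (hm : 1 ≤ m) (hk : 1 ≤ k) (hkm : k * m ≤ n)
    (hα : k * alphaMix P X m ≤ γ / 2) : k * P.real {ω | v < X 1 ω} ≤ Real.log (2 / γ) := by
  set q := P.real {ω | X 1 ω ≤ v}
  have hquant : γ ≤ P.real {ω | maxOnSeq X 1 n ω ≤ v} := hv ▸
    le_measureReal_le_sInf P (measurable_maxOnSeq X hmeas ((Nat.mul_le_mul hk hm).trans hkm)) hγ
  have hblock : γ ≤ q ^ k + k * alphaMix P X m :=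
    hquant.trans <| (measureReal_mono fun ω => Zfun_le_of_maxOnSeq_le X hm hk hkm).trans
      (measureReal_Zfun_le_le hmeas hstat hm v hk)
  have htail : P.real {ω | v < X 1 ω} = 1 - q := by
    rw [← probReal_compl_eq_one_sub (s := {ω | X 1 ω ≤ v}) (hmeas 1 measurableSet_Iic)]
    congr with ω
    simp
  rw [htail, show Real.log (2 / γ) = -Real.log (γ / 2) by rw [← Real.log_inv, inv_div]]
  exact mul_one_sub_le_neg_log_of_le_pow (half_pos hγ.1) measureReal_nonneg (by linarith)

theorem measureReal_lt_quantile_le {θ : ℝ} (hθ : 0 ≤ θ) (hn : 4 ≤ (n : ℝ) ^ (1 - θ))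
    (hα : (n / ⌈(n : ℝ) ^ θ⌉₊ : ℕ) * alphaMix P X ⌈(n : ℝ) ^ θ⌉₊ ≤ γ / 2) :
    P.real {ω | v < X 1 ω} ≤ 4 * Real.log (2 / γ) * (n : ℝ) ^ (θ - 1) := by
  set k := n / ⌈(n : ℝ) ^ θ⌉₊
  have hk : (n : ℝ) ^ (1 - θ) / 4 ≤ k := rpow_div_four_le_div_ceil_rpow hθ hn
  have hk1 : 1 ≤ k := by exact_mod_cast (show (1 : ℝ) ≤ k by linarith)
  have hm : 1 ≤ ⌈(n : ℝ) ^ θ⌉₊ := Nat.pos_of_ne_zero fun h => by simp [k, h] at hk1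
  have hbound := mul_measureReal_lt_quantile_le hmeas hstat hγ hv hm hk1 (Nat.div_mul_le_self _ _) hα
  have hp : 0 ≤ P.real {ω | v < X 1 ω} := measureReal_nonneg
  rw [show θ - 1 = -(1 - θ) by ring, Real.rpow_neg (Nat.cast_nonneg n), ← div_eq_mul_inv,
    le_div_iff₀ (by linarith)]
  nlinarith

end Tail

theorem stmt9 {Ω : Type*} [MeasurableSpace Ω] (P : Measure Ω) [IsProbabilityMeasure P]
    (X : ℕ → Ω → ℝ) (hmeas : ∀ i, Measurable (X i)) (hstat : Stationary P X)
    (β : ℝ) (hβ : 0 < β) (c : ℝ)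
    (hα : ∀ r : ℕ, 1 ≤ r → alphaMix P X r ≤ c * (r : ℝ) ^ (-β))
    (γ : ℝ) (hγ : γ ∈ Set.Ioo (0 : ℝ) 1) (v : ℕ → ℝ)
    (hv : ∀ n : ℕ, v n = sInf {x | γ ≤ pr P {ω | maxOnSeq X 1 n ω ≤ x}}) :
    ∀ δ : ℝ, δ < β / (1 + β) →
      Tendsto (fun n : ℕ => (n : ℝ) ^ δ * pr P {ω | v n < X 1 ω}) atTop (𝓝 0) := by
  intro δ hδ
  obtain ⟨θ, hθ0, hθ1, hθδ, hθβ⟩ := exists_block_exponent hβ hδ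
  have hmix := (tendsto_div_ceil_rpow_mul_alphaMix hβ.le hα hθβ).eventually
    (eventually_le_nhds (half_pos hγ.1))
  have hlarge : ∀ᶠ n : ℕ in atTop, 4 ≤ (n : ℝ) ^ (1 - θ) :=
    ((tendsto_rpow_atTop (by linarith)).comp tendsto_natCast_atTop_atTop).eventually_ge_atTop 4
  have hbound : ∀ᶠ n : ℕ in atTop, (n : ℝ) ^ δ * pr P {ω | v n < X 1 ω}
      ≤ 4 * Real.log (2 / γ) * (n : ℝ) ^ (-(1 - θ - δ)) := by
    filter_upwards [hlarge, hmix] with n hn hmixn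
    calc (n : ℝ) ^ δ * pr P {ω | v n < X 1 ω}
        ≤ (n : ℝ) ^ δ * (4 * Real.log (2 / γ) * (n : ℝ) ^ (θ - 1)) := by
          gcongr
          exact measureReal_lt_quantile_le hmeas hstat hγ (hv n) hθ0.le hn hmixn
      _ = _ := by
          rw [show -(1 - θ - δ) = δ + (θ - 1) by ring,
            Real.rpow_add' (Nat.cast_nonneg n) (by linarith : δ + (θ - 1) < 0).ne]
          ring
  refine squeeze_zero' (.of_forall fun n => mul_nonneg (by positivity) ENNReal.toReal_nonneg)
    hbound ?_
  rw [← mul_zero (4 * Real.log (2 / γ))]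
  exact ((tendsto_rpow_neg_atTop (by linarith)).comp tendsto_natCast_atTop_atTop).const_mul _
end
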